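/- arXiv:2010.15234 — 2 statements merged into one kernel-verified Lean document; each statement's English description precedes it below -/
import Mathlib

section
/- Consider the unconstrained two-environment linear regression game U-LRG on ℝⁿ. If the least squares optimal solutions of the two environments differ, i.e. w₁* ≠ w₂*, then U-LRG has no pure Nash equilibrium. -/
/-!
Each risk depends on the actions only through the sum `w₁ + w₂`, and in the unconstrained game
either player can move this sum anywhere. So at an equilibrium the sum minimises both quadratics
`x ↦ xᵀ Σ_e x - 2 ρ_eᵀ x`. Completing the square, `xᵀ Σ x - 2 ρᵀ x` exceeds its value at
`w* = Σ⁻¹ ρ` by `(x - w*)ᵀ Σ (x - w*)`, so for positive definite `Σ` its only minimiser is `w*`.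
Hence the sum would equal both `w₁*` and `w₂*`.
-/

open Matrix

noncomputable def risk {n : ℕ} (S : Matrix (Fin n) (Fin n) ℝ) (ρ : Fin n → ℝ)
    (w₁ w₂ : Fin n → ℝ) : ℝ :=
  (w₁ + w₂) ⬝ᵥ (S *ᵥ (w₁ + w₂)) - 2 * (ρ ⬝ᵥ (w₁ + w₂))

namespace Matrix

variable {ι : Type*} [Fintype ι] {S : Matrix ι ι ℝ}

lemma IsHermitian.dotProduct_mulVec_comm (hS : S.IsHermitian) (x y : ι → ℝ) :
    x ⬝ᵥ (S *ᵥ y) = y ⬝ᵥ (S *ᵥ x) := by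
  have hST : Sᵀ = S := (conjTranspose_eq_transpose_of_trivial S).symm.trans hS
  rw [dotProduct_mulVec, ← mulVec_transpose, hST, dotProduct_comm]

lemma IsHermitian.sub_dotProduct_mulVec_sub (hS : S.IsHermitian) {ρ z : ι → ℝ}
    (hz : S *ᵥ z = ρ) (x : ι → ℝ) :
    (x - z) ⬝ᵥ (S *ᵥ (x - z)) =
      (x ⬝ᵥ (S *ᵥ x) - 2 * (ρ ⬝ᵥ x)) - (z ⬝ᵥ (S *ᵥ z) - 2 * (ρ ⬝ᵥ z)) := by
  have hzx : z ⬝ᵥ (S *ᵥ x) = ρ ⬝ᵥ x := by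
    rw [hS.dotProduct_mulVec_comm, hz, dotProduct_comm]
  have hzz : z ⬝ᵥ (S *ᵥ z) = ρ ⬝ᵥ z := by rw [hz, dotProduct_comm]
  simp only [sub_dotProduct, dotProduct_sub, mulVec_sub, hzx, hzz]
  rw [hz, dotProduct_comm x ρ]
  ring

lemma PosDef.eq_inv_mulVec_of_forall_le [DecidableEq ι] (hS : S.PosDef) {ρ x : ι → ℝ}
    (hx : ∀ y, x ⬝ᵥ (S *ᵥ x) - 2 * (ρ ⬝ᵥ x) ≤ y ⬝ᵥ (S *ᵥ y) - 2 * (ρ ⬝ᵥ y)) :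
    x = S⁻¹ *ᵥ ρ := by
  have hSz : S *ᵥ (S⁻¹ *ᵥ ρ) = ρ := by
    rw [mulVec_mulVec, mul_nonsing_inv _ (isUnit_iff_ne_zero.mpr hS.det_pos.ne'), one_mulVec]
  by_contra hne
  have hpos := hS.dotProduct_mulVec_pos (sub_ne_zero.mpr hne)
  rw [star_trivial, hS.isHermitian.sub_dotProduct_mulVec_sub hSz] at hpos
  linarith [hx (S⁻¹ *ᵥ ρ)]

end Matrix

section risk

variable {n : ℕ} {S : Matrix (Fin n) (Fin n) ℝ} {ρ : Fin n → ℝ}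

lemma risk_comm (S : Matrix (Fin n) (Fin n) ℝ) (ρ w₁ w₂ : Fin n → ℝ) :
    risk S ρ w₁ w₂ = risk S ρ w₂ w₁ := by
  rw [risk, risk, add_comm w₁]

lemma add_eq_inv_mulVec_of_forall_risk_le (hS : S.PosDef) {w₁ w₂ : Fin n → ℝ}
    (h : ∀ u, risk S ρ w₁ w₂ ≤ risk S ρ u w₂) : w₁ + w₂ = S⁻¹ *ᵥ ρ :=
  hS.eq_inv_mulVec_of_forall_le fun y => by simpa [risk] using h (y - w₂)

end risk

/-- In the unconstrained two-environment linear regression game U-LRG,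
if the least squares optimal solutions differ (`w₁* ≠ w₂*`), then there is no
pure Nash equilibrium. -/
theorem ulrg_no_nash_of_ls_ne {n : ℕ}
    (S₁ S₂ : Matrix (Fin n) (Fin n) ℝ) (hS₁ : S₁.PosDef) (hS₂ : S₂.PosDef)
    (ρ₁ ρ₂ : Fin n → ℝ)
    (hne : S₁⁻¹ *ᵥ ρ₁ ≠ S₂⁻¹ *ᵥ ρ₂) :
    ¬ ∃ w₁ w₂ : Fin n → ℝ,
        (∀ u : Fin n → ℝ, risk S₁ ρ₁ w₁ w₂ ≤ risk S₁ ρ₁ u w₂) ∧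
        (∀ v : Fin n → ℝ, risk S₂ ρ₂ w₁ w₂ ≤ risk S₂ ρ₂ w₁ v) := by
  rintro ⟨w₁, w₂, h₁, h₂⟩
  have e₁ : w₁ + w₂ = S₁⁻¹ *ᵥ ρ₁ := add_eq_inv_mulVec_of_forall_risk_le hS₁ h₁
  have e₂ : w₂ + w₁ = S₂⁻¹ *ᵥ ρ₂ := add_eq_inv_mulVec_of_forall_risk_le hS₂ fun v => by
    rw [risk_comm, risk_comm S₂ ρ₂ v]
    exact h₂ v
  exact hne (e₁.symm.trans (add_comm w₁ w₂ ▸ e₂))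
end

section
/- Consider the scalar best response dynamic with bound W > 0 and targets w₁*, w₂* ∈ ℝ. If the targets have opposite signs, w₁* < 0 < w₂*, and |w₁*| ≤ W and |w₂*| ≤ W, then there exists T such that for all t ≥ T, a_t = −W and b_t = W; in particular the ensemble a_t + b_t is eventually equal to 0. -/
/-- Clamp a real number to the interval `[−W, W]`. -/
noncomputable def clamp (W x : ℝ) : ℝ := max (-W) (min W x)

/-- The scalar best response dynamic with bound `W` and targets `w₁*, w₂*`:
`a₀ = b₀ = 0`; at odd steps environment 1 best-responds,
`a_t = clamp_W (w₁* − b_{t−1})`; at even steps environment 2 best-responds,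
`b_t = clamp_W (w₂* − a_{t−1})`. The state at time `t` is the pair `(a_t, b_t)`. -/
noncomputable def brd (W w₁ w₂ : ℝ) : ℕ → ℝ × ℝ
  | 0 => (0, 0)
  | t + 1 =>
    let s := brd W w₁ w₂ t
    if (t + 1) % 2 = 1 then (clamp W (w₁ - s.2), s.2)
    else (s.1, clamp W (w₂ - s.1))

lemma brd_succ (W w₁ w₂ : ℝ) (t : ℕ) : brd W w₁ w₂ (t+1) =
    if (t + 1) % 2 = 1 then
      (clamp W (w₁ - (brd W w₁ w₂ t).2), (brd W w₁ w₂ t).2)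
    else ((brd W w₁ w₂ t).1, clamp W (w₂ - (brd W w₁ w₂ t).1)) := rfl

lemma key_clamp (W w₁ w₂ a : ℝ) (hW : 0 < W) (h₁ : w₁ < 0) (h₂ : 0 < w₂)
    (ha : -W ≤ a) (ha' : a ≤ w₁) :
    clamp W (w₁ - clamp W (w₂ - a)) = max (-W) (w₁ - w₂ + a) := by
  have hb : clamp W (w₂ - a) = min W (w₂ - a) := by
    unfold clamp
    exact max_eq_right (le_min (by linarith) (by linarith))
  have hbpos : 0 < min W (w₂ - a) := lt_min hW (by linarith)
  rw [hb]
  unfold clamp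
  rw [min_eq_right (by rcases le_total W (w₂ - a) with h | h <;>
    [rw [min_eq_left h]; rw [min_eq_right h]] <;> linarith)]
  rcases le_total W (w₂ - a) with h | h
  · rw [min_eq_left h, max_eq_left (by linarith), max_eq_left (by linarith)]
  · rw [min_eq_right h]
    ring_nf

lemma brd_odd_fst (W w₁ w₂ : ℝ) (hW : 0 < W) (h₁ : w₁ < 0) (h₂ : 0 < w₂)
    (hb₁ : -W ≤ w₁) (k : ℕ) :
    (brd W w₁ w₂ (2*k+1)).1 = max (-W) ((k+1)*w₁ - k*w₂) := by
  induction k with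
  | zero =>
    have : brd W w₁ w₂ 1 = (clamp W (w₁ - (0:ℝ)), (0:ℝ)) := by
      rw [show (1:ℕ) = 0 + 1 from rfl, brd_succ, if_pos (by norm_num)]
      simp [brd]
    rw [show 2*0+1 = 1 from rfl, this]
    unfold clamp
    rw [sub_zero, min_eq_right (by linarith)]
    norm_num
  | succ k ih =>
    set a := (brd W w₁ w₂ (2*k+1)).1 with hadef
    have haW : -W ≤ a := by rw [ih]; exact le_max_left _ _
    have haw : a ≤ w₁ := by
      rw [ih]
      refine max_le hb₁ ?_
      have hk0 : (0:ℝ) ≤ (k:ℝ) := Nat.cast_nonneg k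
      nlinarith
    have hstep2 : brd W w₁ w₂ (2*k+2) = (a, clamp W (w₂ - a)) := by
      rw [show 2*k+2 = (2*k+1)+1 from rfl, brd_succ, if_neg (by omega)]
    have hstep3 : brd W w₁ w₂ (2*(k+1)+1) =
        (clamp W (w₁ - clamp W (w₂ - a)), clamp W (w₂ - a)) := by
      rw [show 2*(k+1)+1 = (2*k+2)+1 by ring, brd_succ, if_pos (by omega), hstep2]
    rw [hstep3]
    simp only
    rw [key_clamp W w₁ w₂ a hW h₁ h₂ haW haw]
    rw [ih]
    rcases le_total ((k+1)*w₁ - k*w₂) (-W) with h | h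
    · rw [max_eq_left h, max_eq_left (by linarith), max_eq_left (by push_cast; nlinarith)]
    · rw [max_eq_right h]
      congr 1
      push_cast
      ring

lemma brd_fixed (W w₁ w₂ : ℝ) (hW : 0 < W) (h₁ : w₁ < 0) (h₂ : 0 < w₂)
    (t : ℕ) (h : brd W w₁ w₂ t = (-W, W)) : brd W w₁ w₂ (t+1) = (-W, W) := by
  rw [brd_succ, h]
  have e1 : clamp W (w₁ - W) = -W := by
    unfold clamp
    rw [min_eq_right (by linarith), max_eq_left (by linarith)]
  have e2 : clamp W (w₂ + W) = W := by
    unfold clamp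
    rw [min_eq_left (by linarith), max_eq_right (by linarith)]
  split_ifs <;> simp [e1, e2, sub_neg_eq_add]

/-- If the targets have opposite signs, `w₁* < 0 < w₂*`, with
`|w₁*| ≤ W` and `|w₂*| ≤ W`, then the scalar best response dynamic eventually
stabilizes at `(a_t, b_t) = (−W, W)`; in particular the ensemble `a_t + b_t` is
eventually equal to `0`. -/
theorem brd_converges_opposite_sign (W w₁ w₂ : ℝ) (hW : 0 < W)
    (h₁ : w₁ < 0) (h₂ : 0 < w₂) (hb₁ : |w₁| ≤ W) (hb₂ : |w₂| ≤ W) :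
    ∃ T : ℕ, ∀ t ≥ T, brd W w₁ w₂ t = (-W, W) := by
  have hb₁' : -W ≤ w₁ := neg_le_of_abs_le hb₁
  obtain ⟨k, hk⟩ := exists_nat_ge ((W + w₁) / (w₂ - w₁))
  have hd : 0 < w₂ - w₁ := by linarith
  have hkk : W + w₁ ≤ k * (w₂ - w₁) := by
    rw [div_le_iff₀ hd] at hk
    linarith
  have ha : (brd W w₁ w₂ (2*k+1)).1 = -W := by
    rw [brd_odd_fst W w₁ w₂ hW h₁ h₂ hb₁' k]
    exact max_eq_left (by nlinarith)
  have hT : brd W w₁ w₂ (2*k+2) = (-W, W) := by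
    rw [show 2*k+2 = (2*k+1)+1 from rfl, brd_succ, if_neg (by omega), ha]
    have e2 : clamp W (w₂ - -W) = W := by
      unfold clamp
      rw [min_eq_left (by linarith), max_eq_right (by linarith)]
    rw [e2]
  refine ⟨2*k+2, ?_⟩
  intro t ht
  induction t, ht using Nat.le_induction with
  | base => exact hT
  | succ n hn ih => exact brd_fixed W w₁ w₂ hW h₁ h₂ n ih
end
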